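/- Let T ≥ 1, N ≥ 1, let U_1,…,U_T be unitary N×N complex matrices, let A and Π be orthogonal projections on ℂ^N, and let φ_0 ∈ ℂ^N be a unit vector with A φ_0 = 0 and Π U_T U_{T−1} ⋯ U_1 φ_0 = 0. Then the Hermitian matrix H = A ⊗ E_{0,0} + Σ_{t=1}^T H_t + Π ⊗ E_{T,T} on ℂ^N ⊗ ℂ^{T+1} is positive semidefinite and has smallest eigenvalue equal to 0. -/

import Mathlib

open Matrix Kronecker ComplexOrder

/-- The matrix unit `E s s' = e_s e_{s'}†` on `ℂ^{T+1}`. -/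
noncomputable def matUnit (T : ℕ) (s s' : Fin (T + 1)) :
    Matrix (Fin (T + 1)) (Fin (T + 1)) ℂ :=
  Matrix.single s s' 1

section helpers

lemma kron_conjT {m n : Type*} [Fintype m] [Fintype n]
    (A : Matrix m m ℂ) (B : Matrix n n ℂ) : (A ⊗ₖ B)ᴴ = Aᴴ ⊗ₖ Bᴴ := by
  ext ⟨i, s⟩ ⟨j, u⟩
  simp [conjTranspose_apply, kroneckerMap_apply, star_mul', mul_comm]

lemma matUnit_conjT (T : ℕ) (s s' : Fin (T + 1)) :
    (matUnit T s s')ᴴ = matUnit T s' s := by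
  ext a b
  simp [matUnit, conjTranspose_apply, Matrix.single, and_comm]

lemma matUnit_mul (T : ℕ) (a b c : Fin (T + 1)) :
    matUnit T a b * matUnit T b c = matUnit T a c := by
  simp [matUnit]

lemma matUnit_mul_ne (T : ℕ) (a b c d : Fin (T + 1)) (h : b ≠ c) :
    matUnit T a b * matUnit T c d = 0 := by
  exact Matrix.single_mul_single_of_ne 1 a b c h 1

lemma psd_smul_half {n : Type*} [Fintype n] {M : Matrix n n ℂ} (hM : M.PosSemidef) :
    ((1/2 : ℂ) • M).PosSemidef := by
  constructor
  · unfold Matrix.IsHermitian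
    rw [conjTranspose_smul, hM.1]
    norm_num
  · intro x
    have h2 : (0:ℂ) ≤ (1/2 : ℂ) := by
      rw [Complex.le_def]; norm_num
    exact (hM.smul h2).2 x

lemma kron_mulVec {N : ℕ} {T : ℕ} (M : Matrix (Fin N) (Fin N) ℂ) (s s' : Fin (T+1))
    (ψ : Fin N × Fin (T + 1) → ℂ) (i : Fin N) (u : Fin (T + 1)) :
    (M ⊗ₖ matUnit T s s').mulVec ψ (i, u)
      = if u = s then M.mulVec (fun j => ψ (j, s')) i else 0 := by
  simp only [Matrix.mulVec, dotProduct, Fintype.sum_prod_type, kroneckerMap_apply,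
    matUnit, Matrix.single, Matrix.of_apply]
  by_cases h : u = s
  · subst h
    rw [if_pos rfl]
    refine Finset.sum_congr rfl fun j _ => ?_
    rw [show (∑ v : Fin (T+1), (M i j * if u = u ∧ s' = v then 1 else 0) * ψ (j, v))
        = ∑ v : Fin (T+1), if v = s' then M i j * ψ (j, v) else 0 from
      Finset.sum_congr rfl fun v _ => by
        by_cases hv : v = s'
        · simp [hv]
        · simp [hv, Ne.symm hv]]
    simp
  · rw [if_neg h]
    refine Finset.sum_eq_zero fun j _ => Finset.sum_eq_zero fun v _ => ?_
    have : ¬ (s = u ∧ s' = v) := fun hc => h hc.1.symm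
    simp [this]

end helpers

section helpers2
lemma sum_mulVec' {n m : Type*} [Fintype n] [Fintype m] {ι : Type*} (s : Finset ι)
    (M : ι → Matrix m n ℂ) (v : n → ℂ) :
    (∑ t ∈ s, M t) *ᵥ v = ∑ t ∈ s, M t *ᵥ v := by
  ext i
  simp [Matrix.mulVec, dotProduct, Matrix.sum_apply, Finset.sum_mul]
  rw [Finset.sum_comm]

end helpers2

/-- Kitaev's propagation term
`H_t = (1/2)(I ⊗ (E_{t,t} + E_{t-1,t-1}) - U_t ⊗ E_{t,t-1} - U_t† ⊗ E_{t-1,t})`,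
where `t : Fin T` encodes the time step `t+1 ∈ {1,…,T}`, with clock indices
`t.succ = t+1` and `t.castSucc = t` in `Fin (T+1)`. -/
noncomputable def kitaevTerm (T N : ℕ) (U : Matrix (Fin N) (Fin N) ℂ) (t : Fin T) :
    Matrix (Fin N × Fin (T + 1)) (Fin N × Fin (T + 1)) ℂ :=
  (1 / 2 : ℂ) •
    ((1 : Matrix (Fin N) (Fin N) ℂ) ⊗ₖ
        (matUnit T t.succ t.succ + matUnit T t.castSucc t.castSucc)
      - U ⊗ₖ matUnit T t.succ t.castSucc
      - Uᴴ ⊗ₖ matUnit T t.castSucc t.succ)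

/-- Perfect completeness: if the circuit accepts a valid input with probability 1,
the Kitaev Hamiltonian is positive semidefinite with smallest eigenvalue 0. -/
theorem stmt1 (T N : ℕ) (hT : 1 ≤ T) (hN : 1 ≤ N)
    (U : Fin T → Matrix (Fin N) (Fin N) ℂ)
    (hU : ∀ t, (U t)ᴴ * U t = 1 ∧ U t * (U t)ᴴ = 1)
    (A P : Matrix (Fin N) (Fin N) ℂ)
    (hA : A.IsHermitian) (hA2 : A * A = A)
    (hP : P.IsHermitian) (hP2 : P * P = P)
    (φ : Fin (T + 1) → Fin N → ℂ)
    (hφ0 : star (φ 0) ⬝ᵥ φ 0 = 1)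
    (hAφ0 : A.mulVec (φ 0) = 0)
    (hrec : ∀ t : Fin T, φ t.succ = (U t).mulVec (φ t.castSucc))
    (hacc : P.mulVec (φ (Fin.last T)) = 0) :
    (A ⊗ₖ matUnit T 0 0 + ∑ t : Fin T, kitaevTerm T N (U t) t
        + P ⊗ₖ matUnit T (Fin.last T) (Fin.last T)).PosSemidef ∧
    ∃ hH : (A ⊗ₖ matUnit T 0 0 + ∑ t : Fin T, kitaevTerm T N (U t) t
        + P ⊗ₖ matUnit T (Fin.last T) (Fin.last T)).IsHermitian,
      ∃ i, hH.eigenvalues i = 0 := by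
  set H := A ⊗ₖ matUnit T 0 0 + ∑ t : Fin T, kitaevTerm T N (U t) t
      + P ⊗ₖ matUnit T (Fin.last T) (Fin.last T) with hHdef
  -- PSD of projector ⊗ matUnit terms
  have projPSD : ∀ (B : Matrix (Fin N) (Fin N) ℂ), B.IsHermitian → B * B = B →
      ∀ s : Fin (T + 1), (B ⊗ₖ matUnit T s s).PosSemidef := by
    intro B hB hB2 s
    have key : B ⊗ₖ matUnit T s s = (B ⊗ₖ matUnit T s s)ᴴ * (B ⊗ₖ matUnit T s s) := by
      rw [kron_conjT, matUnit_conjT, ← mul_kronecker_mul, matUnit_mul, hB.eq, hB2]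
    rw [key]
    exact Matrix.posSemidef_conjTranspose_mul_self _
  -- PSD of kitaev terms
  have kitPSD : ∀ t : Fin T, (kitaevTerm T N (U t) t).PosSemidef := by
    intro t
    set M := (1 : Matrix (Fin N) (Fin N) ℂ) ⊗ₖ matUnit T t.succ t.succ
        - U t ⊗ₖ matUnit T t.succ t.castSucc with hM
    have hne : t.castSucc ≠ t.succ := (Fin.castSucc_lt_succ : t.castSucc < t.succ).ne
    have key : kitaevTerm T N (U t) t = (1 / 2 : ℂ) • (Mᴴ * M) := by
      have hMH : Mᴴ = (1 : Matrix (Fin N) (Fin N) ℂ) ⊗ₖ matUnit T t.succ t.succ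
          - (U t)ᴴ ⊗ₖ matUnit T t.castSucc t.succ := by
        rw [hM, conjTranspose_sub, kron_conjT, kron_conjT, matUnit_conjT, matUnit_conjT,
          conjTranspose_one]
      rw [kitaevTerm, hMH, hM]
      congr 1
      rw [sub_mul, mul_sub, mul_sub, ← mul_kronecker_mul, ← mul_kronecker_mul,
        ← mul_kronecker_mul, ← mul_kronecker_mul, matUnit_mul, matUnit_mul, matUnit_mul,
        matUnit_mul, (hU t).1, one_mul, one_mul, mul_one, kronecker_add]
      abel
    rw [key]
    exact psd_smul_half (Matrix.posSemidef_conjTranspose_mul_self M)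
  have hPSD : H.PosSemidef := by
    refine ((projPSD A hA hA2 0).add ?_).add (projPSD P hP hP2 (Fin.last T))
    classical
    refine Finset.sum_induction _ Matrix.PosSemidef
      (fun a b ha hb => ha.add hb) Matrix.PosSemidef.zero (fun t _ => kitPSD t)
  refine ⟨hPSD, hPSD.1, ?_⟩
  -- the history state
  set ψ : Fin N × Fin (T + 1) → ℂ := fun p => φ p.2 p.1 with hψ
  have hψne : ψ ≠ 0 := by
    intro h
    have : star (φ 0) ⬝ᵥ φ 0 = 0 := by
      have hz : φ 0 = 0 := by
        funext i
        have := congrFun h (i, 0)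
        simpa [hψ] using this
      simp [hz]
    rw [hφ0] at this
    exact one_ne_zero this
  have hkit0 : ∀ t : Fin T, (kitaevTerm T N (U t) t) *ᵥ ψ = 0 := by
    intro t
    funext p
    obtain ⟨i, u⟩ := p
    have hUc : (U t)ᴴ *ᵥ (fun j => ψ (j, t.succ)) = fun j => ψ (j, t.castSucc) := by
      have : (fun j => ψ (j, t.succ)) = φ t.succ := rfl
      rw [this, hrec t, Matrix.mulVec_mulVec, (hU t).1, Matrix.one_mulVec]
    rw [kitaevTerm, Matrix.smul_mulVec, Matrix.sub_mulVec, Matrix.sub_mulVec,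
      kronecker_add, Matrix.add_mulVec]
    simp only [Pi.smul_apply, Pi.sub_apply, Pi.add_apply]
    rw [kron_mulVec, kron_mulVec, kron_mulVec, kron_mulVec]
    rw [hUc]
    have h1 : (1 : Matrix (Fin N) (Fin N) ℂ) *ᵥ (fun j => ψ (j, t.succ))
        = fun j => ψ (j, t.succ) := Matrix.one_mulVec _
    have h2 : (1 : Matrix (Fin N) (Fin N) ℂ) *ᵥ (fun j => ψ (j, t.castSucc))
        = fun j => ψ (j, t.castSucc) := Matrix.one_mulVec _
    have h3 : (U t) *ᵥ (fun j => ψ (j, t.castSucc)) = fun j => ψ (j, t.succ) := by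
      have : (fun j => ψ (j, t.castSucc)) = φ t.castSucc := rfl
      rw [this, ← hrec t]
    rw [h1, h2, h3]
    by_cases hs : u = t.succ <;> by_cases hc : u = t.castSucc <;>
      simp [hs, hc]
  have hHψ : H *ᵥ ψ = 0 := by
    rw [hHdef, Matrix.add_mulVec, Matrix.add_mulVec, sum_mulVec']
    have hA0 : (A ⊗ₖ matUnit T 0 0) *ᵥ ψ = 0 := by
      funext p
      obtain ⟨i, u⟩ := p
      rw [kron_mulVec]
      have : (fun j => ψ (j, 0)) = φ 0 := rfl
      rw [this, hAφ0]
      simp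
    have hP0 : (P ⊗ₖ matUnit T (Fin.last T) (Fin.last T)) *ᵥ ψ = 0 := by
      funext p
      obtain ⟨i, u⟩ := p
      rw [kron_mulVec]
      have : (fun j => ψ (j, Fin.last T)) = φ (Fin.last T) := rfl
      rw [this, hacc]
      simp
    rw [hA0, hP0]
    simp [hkit0]
  have hdet : H.det = 0 := by
    rw [← Matrix.exists_mulVec_eq_zero_iff]
    exact ⟨ψ, hψne, hHψ⟩
  have := hPSD.1.det_eq_prod_eigenvalues
  rw [hdet] at this
  have := Finset.prod_eq_zero_iff.mp this.symm
  obtain ⟨i, _, hi⟩ := this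
  exact ⟨i, Complex.ofReal_eq_zero.mp hi⟩
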